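/- arXiv:cs/0106034 — 5 statements merged into one kernel-verified Lean document; each statement's English description precedes it below -/
import Mathlib

section
/- For every natural number k there exists a natural number N such that for every finite set D with |D| = n ≥ N and every subgroup G of Sym(D), if |G| ≥ (n−k)!, then G has an orbit on D of cardinality at least n−k. -/
/-!
If every orbit of a group acting on a finite set `T` has at most `s` points, the pointwise
stabiliser of `T` has index at most `s! (|T| - s)!` when `|T| ≥ s`: split off one orbit `O`,
note that the stabiliser of `T` is the intersection of those of `O` (index at most `|O|!`) and
of `T \ O` (induction), and use that shifting `d` from the smaller to the larger argument of
`a! b!` only increases the product. For `G ≤ Sym(D)` with all orbits smaller than `n - k`,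
taking `s = n - k - 1` gives `|G| ≤ (n - k - 1)! (k + 1)!`, which is less than `(n - k)!` once
`n - k > (k + 1)!`.
-/

open Nat MulAction

theorem Nat.factorial_mul_factorial_add_le {a b : ℕ} (d : ℕ) (h : b ≤ a) :
    a ! * (b + d)! ≤ (a + d)! * b ! :=
  calc a ! * (b + d)! = a ! * b ! * (b + 1).ascFactorial d := by
        rw [← factorial_mul_ascFactorial, mul_assoc]
    _ ≤ a ! * b ! * (a + 1).ascFactorial d := by gcongr
    _ = (a + d)! * b ! := by rw [← factorial_mul_ascFactorial]; ring

/-- An upper bound for `a₁! ⋯ aᵣ!` over all ways of writing `t = a₁ + ⋯ + aᵣ` with `aᵢ ≤ s`. -/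
def orbitFactorialBound (s t : ℕ) : ℕ :=
  (min t s)! * (t - s)!

theorem factorial_mul_orbitFactorialBound_sub_le {m s t : ℕ} (hms : m ≤ s) (hmt : m ≤ t) :
    m ! * orbitFactorialBound s (t - m) ≤ orbitFactorialBound s t := by
  unfold orbitFactorialBound
  rcases le_or_gt s (t - m) with h | h
  · have := factorial_mul_factorial_add_le (t - m - s) (zero_le m)
    rw [show min (t - m) s = s by omega, show min t s = s by omega, mul_left_comm]
    gcongr
    simpa [show m + (t - m - s) = t - s by omega] using this
  · have := factorial_mul_factorial_add_le (b := t - s) (min t s - m) (by omega : t - s ≤ m)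
    rw [show t - s + (min t s - m) = t - m by omega,
      show m + (min t s - m) = min t s by omega] at this
    rwa [show min (t - m) s = t - m by omega, show t - m - s = 0 by omega, factorial_zero,
      mul_one]

section

variable {G D : Type*} [Group G] [MulAction G D]

theorem index_fixingSubgroup_orbit_le (x : D) [Finite (orbit G x)] :
    (fixingSubgroup G (orbit G x)).index ≤ (orbit G x).ncard ! := by
  have hker : (toPermHom G (orbit G x)).ker = fixingSubgroup G (orbit G x) := by
    ext g
    simp [mem_fixingSubgroup_iff, Equiv.Perm.ext_iff, Subtype.ext_iff]
  rw [← hker, Subgroup.index_ker, ← Nat.card_coe_set_eq, ← Nat.card_perm]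
  exact Subgroup.card_le_card_group _

theorem index_fixingSubgroup_le_of_ncard_orbit_le (s : ℕ) {T : Set D} (hT : T.Finite)
    (hinv : ∀ g : G, ∀ y ∈ T, g • y ∈ T) (horb : ∀ x ∈ T, (orbit G x).ncard ≤ s) :
    (fixingSubgroup G T).index ≤ orbitFactorialBound s T.ncard := by
  induction hn : T.ncard using Nat.strong_induction_on generalizing T with
  | _ n ih =>
  rcases T.eq_empty_or_nonempty with rfl | ⟨x, hx⟩
  · simp [fixingSubgroup_empty, orbitFactorialBound, ← hn]
  have hO : orbit G x ⊆ T := by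
    rintro _ ⟨g, rfl⟩
    exact hinv g x hx
  have : Finite (orbit G x) := hT.subset hO
  have hOpos : 0 < (orbit G x).ncard := (Set.ncard_pos).2 ⟨x, mem_orbit_self x⟩
  have hOT : (orbit G x).ncard ≤ n := hn ▸ Set.ncard_le_ncard hO hT
  have hRinv : ∀ g : G, ∀ y ∈ T \ orbit G x, g • y ∈ T \ orbit G x := by
    rintro g y ⟨hyT, hyO⟩
    refine ⟨hinv g y hyT, fun hgy => hyO ?_⟩
    rw [← orbit_eq_iff, ← orbit_smul g y]
    exact orbit_eq_iff.2 hgy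
  have hR := ih (n - (orbit G x).ncard) (by omega) hT.sdiff hRinv (fun y hy => horb y hy.1)
    (by rw [Set.ncard_sdiff hO, hn])
  rw [← Set.union_sdiff_cancel hO, fixingSubgroup_union]
  calc _ ≤ (fixingSubgroup G (orbit G x)).index * (fixingSubgroup G (T \ orbit G x)).index :=
        Subgroup.index_inf_le
    _ ≤ (orbit G x).ncard ! * orbitFactorialBound s (n - (orbit G x).ncard) :=
        Nat.mul_le_mul (index_fixingSubgroup_orbit_le x) hR
    _ ≤ _ := factorial_mul_orbitFactorialBound_sub_le (horb x hx) hOT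

theorem fixingSubgroup_univ_eq_bot [FaithfulSMul G D] :
    fixingSubgroup G (Set.univ : Set D) = ⊥ := by
  ext g
  simp only [mem_fixingSubgroup_iff, Set.mem_univ, true_imp_iff, Subgroup.mem_bot]
  exact ⟨fun h => eq_of_smul_eq_smul fun a => by rw [h, one_smul], by rintro rfl; simp⟩

end

/-- For every natural number k there exists N such that for every finite
set D with |D| = n ≥ N and every subgroup G of Sym(D), if |G| ≥ (n−k)!, then G has an
orbit on D of cardinality at least n−k. -/
theorem stmt_2 (k : ℕ) :
    ∃ N : ℕ, ∀ (D : Type) [Fintype D],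
      N ≤ Fintype.card D →
      ∀ G : Subgroup (Equiv.Perm D),
        Nat.factorial (Fintype.card D - k) ≤ Nat.card G →
        ∃ x : D, Fintype.card D - k ≤ Set.ncard {y : D | ∃ g ∈ G, g x = y} := by
  refine ⟨(k + 1)! + k + 1, fun D _ hN G hG => ?_⟩
  by_contra! hsmall
  set n := Fintype.card D
  have horbit (x : D) : orbit G x = {y : D | ∃ g ∈ G, g x = y} := by
    ext y
    simp [mem_orbit_iff, Subgroup.smul_def, Equiv.Perm.smul_def]
  have hbound := index_fixingSubgroup_le_of_ncard_orbit_le (G := G) (n - (k + 1))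
    Set.finite_univ (fun _ _ _ => Set.mem_univ _) fun x _ => by
      rw [horbit]; have := hsmall x; omega
  rw [fixingSubgroup_univ_eq_bot, Subgroup.index_bot, Set.ncard_univ,
    Nat.card_eq_fintype_card (α := D), orbitFactorialBound, min_eq_right (by omega),
    show n - (n - (k + 1)) = k + 1 by omega] at hbound
  have hfact : (n - (k + 1))! * (k + 1)! < (n - k)! := by
    rw [show n - k = n - (k + 1) + 1 by omega, factorial_succ (n - (k + 1)),
      mul_comm (n - (k + 1) + 1)]
    gcongr
    omega
  omega
end

section
/- Let D be a finite set, Δ ⊆ D, and r a natural number with |Δ| ≥ r + 2. Let X be a set of r-tuples over D that is invariant under every permutation g of D that fixes every element of D∖Δ and restricts to an even permutation of Δ (i.e., u ∈ X implies g∘u ∈ X for all such g). Suppose u, v : {1,…,r} → D satisfy: (i) for every i, u(i) ∈ Δ if and only if v(i) ∈ Δ; (ii) for every i with u(i) ∉ Δ, u(i) = v(i); and (iii) for all i, j: u(i) = u(j) if and only if v(i) = v(j). Then u ∈ X if and only if v ∈ X. -/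
/-!
Restricted to the indices `i` with `u i ∈ Δ`, hypotheses (i) and (iii) say that `u i ↦ v i` is a
well-defined injection between subsets of `Δ`; it extends to a permutation `σ` of `Δ`. At most `r`
points of `Δ` are values of `v`, so since `|Δ| ≥ r + 2` there are two points `a ≠ b` of `Δ` that
are not, and replacing `σ` by `swap a b * σ` if necessary makes `σ` even without changing it on the
values of `u`. Extended by the identity off `Δ`, `σ` carries `u` to `v` by (ii), and symmetrically
some such permutation carries `v` to `u`.
-/

open Equiv Equiv.Perm

namespace Equiv.Perm

variable {α ι : Type*} [Fintype α]

theorem exists_perm_comp_eq {u v : ι → α} (huv : ∀ i j, u i = u j ↔ v i = v j) :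
    ∃ σ : Perm α, ∀ i, σ (u i) = v i := by
  set f := Function.extend u v id
  have hf : ∀ i, f (u i) = v i :=
    Function.FactorsThrough.extend_apply (fun i j => (huv i j).1) id
  have hinj : Set.InjOn f (Set.range u) := by
    rintro _ ⟨i, rfl⟩ _ ⟨j, rfl⟩ h
    rw [hf, hf] at h
    exact (huv i j).2 h
  obtain ⟨g, hg⟩ := Set.MapsTo.exists_equiv_extend_of_card_eq (t := Finset.univ)
    Finset.card_univ.symm (fun x _ => Finset.mem_coe.2 (Finset.mem_univ (f x))) hinj
  exact ⟨g.trans (Equiv.subtypeUnivEquiv Finset.mem_univ),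
    fun i => (hg (u i) (Set.mem_range_self i)).trans (hf i)⟩

theorem exists_mem_alternatingGroup_eqOn [DecidableEq α] (σ : Perm α) {s : Set α} {a b : α}
    (hab : a ≠ b) (ha : a ∉ σ '' s) (hb : b ∉ σ '' s) : ∃ τ ∈ alternatingGroup α, Set.EqOn τ σ s := by
  rcases Int.units_eq_one_or (sign σ) with hσ | hσ
  · exact ⟨σ, hσ, Set.eqOn_refl σ s⟩
  · refine ⟨swap a b * σ, by simp [sign_swap hab, hσ], fun x hx => ?_⟩
    exact swap_apply_of_ne_of_ne (fun h => ha ⟨x, hx, h⟩) (fun h => hb ⟨x, hx, h⟩)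

theorem exists_mem_alternatingGroup_comp_eq [DecidableEq α] [Fintype ι] {u v : ι → α}
    (huv : ∀ i j, u i = u j ↔ v i = v j) (hcard : Fintype.card ι + 2 ≤ Fintype.card α) :
    ∃ σ ∈ alternatingGroup α, ∀ i, σ (u i) = v i := by
  obtain ⟨σ, hσ⟩ := exists_perm_comp_eq huv
  have hrange : σ '' Set.range u = Set.range v := by
    rw [← Set.range_comp]; exact congrArg Set.range (funext hσ)
  have hfree : 1 < (Finset.univ.image v)ᶜ.card := by
    have := Finset.card_image_le (s := Finset.univ) (f := v)
    rw [Finset.card_compl, Finset.card_univ] at *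
    omega
  obtain ⟨a, ha, b, hb, hab⟩ := Finset.one_lt_card.1 hfree
  obtain ⟨τ, hτ, hτσ⟩ := exists_mem_alternatingGroup_eqOn σ hab
    (s := Set.range u) (by simpa [hrange] using ha) (by simpa [hrange] using hb)
  exact ⟨τ, hτ, fun i => (hτσ (Set.mem_range_self i)).trans (hσ i)⟩

end Equiv.Perm

theorem exists_perm_fixing_compl_even_comp_eq {D : Type*} [DecidableEq D] {Δ : Finset D} {r : ℕ}
    (hcard : r + 2 ≤ Δ.card) {u v : Fin r → D} (h1 : ∀ i, u i ∈ Δ ↔ v i ∈ Δ)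
    (h2 : ∀ i, u i ∉ Δ → u i = v i) (h3 : ∀ i j, u i = u j ↔ v i = v j) :
    ∃ (g : Perm D) (hg : ∀ x : D, x ∈ Δ ↔ g x ∈ Δ), (∀ x ∉ Δ, g x = x) ∧
      g.subtypePerm (fun x => (hg x).symm) ∈ alternatingGroup {x // x ∈ Δ} ∧
      (fun i => g (u i)) = v := by
  let u' : {i // u i ∈ Δ} → Δ := fun i => ⟨u i, i.2⟩
  let v' : {i // u i ∈ Δ} → Δ := fun i => ⟨v i, (h1 i).1 i.2⟩
  have hcard' : Fintype.card {i // u i ∈ Δ} + 2 ≤ Fintype.card Δ := by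
    have := Fintype.card_subtype_le (fun i => u i ∈ Δ)
    rw [Fintype.card_coe, Fintype.card_fin] at *
    omega
  obtain ⟨σ, hσ, hσuv⟩ := exists_mem_alternatingGroup_comp_eq (u := u') (v := v')
    (fun i j => by simp only [u', v', Subtype.ext_iff, h3]) hcard'
  refine ⟨ofSubtype σ, fun x => (ofSubtype_apply_mem_iff_mem σ x).symm,
    fun x hx => ofSubtype_apply_of_not_mem σ hx, by rwa [subtypePerm_ofSubtype], funext fun i => ?_⟩
  by_cases hi : u i ∈ Δ
  · rw [ofSubtype_apply_of_mem σ hi]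
    exact congrArg Subtype.val (hσuv ⟨i, hi⟩)
  · rw [ofSubtype_apply_of_not_mem σ hi, h2 i hi]

theorem stmt_10_general (D : Type) [DecidableEq D] (Δ : Finset D) (r : ℕ)
    (hcard : r + 2 ≤ Δ.card)
    (X : Set (Fin r → D))
    (hX : ∀ (g : Equiv.Perm D) (hg : ∀ x : D, x ∈ Δ ↔ g x ∈ Δ),
      (∀ x ∉ Δ, g x = x) →
      g.subtypePerm (fun x => (hg x).symm) ∈ alternatingGroup {x // x ∈ Δ} →
      ∀ u ∈ X, (fun i => g (u i)) ∈ X)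
    (u v : Fin r → D)
    (h1 : ∀ i : Fin r, u i ∈ Δ ↔ v i ∈ Δ)
    (h2 : ∀ i : Fin r, u i ∉ Δ → u i = v i)
    (h3 : ∀ i j : Fin r, u i = u j ↔ v i = v j) :
    u ∈ X ↔ v ∈ X := by
  constructor
  · intro hu
    obtain ⟨g, hg, hfix, heven, rfl⟩ := exists_perm_fixing_compl_even_comp_eq hcard h1 h2 h3
    exact hX g hg hfix heven u hu
  · intro hv
    have h2' : ∀ i, v i ∉ Δ → v i = u i := fun i hi => (h2 i (mt (h1 i).1 hi)).symm
    obtain ⟨g, hg, hfix, heven, rfl⟩ := exists_perm_fixing_compl_even_comp_eq hcard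
      (fun i => (h1 i).symm) h2' (fun i j => (h3 i j).symm)
    exact hX g hg hfix heven v hv

/-- Let D be a finite set, Δ ⊆ D, and r with |Δ| ≥ r + 2. Let X be a set
of r-tuples over D invariant under every permutation g of D that fixes every element of
D∖Δ and restricts to an even permutation of Δ. Suppose u, v : {1,…,r} → D satisfy:
(i) u(i) ∈ Δ ↔ v(i) ∈ Δ for every i; (ii) u(i) = v(i) whenever u(i) ∉ Δ; and
(iii) u(i) = u(j) ↔ v(i) = v(j) for all i, j. Then u ∈ X ↔ v ∈ X. -/
theorem stmt_10 (D : Type) [Fintype D] [DecidableEq D] (Δ : Finset D) (r : ℕ)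
    (hcard : r + 2 ≤ Δ.card)
    (X : Set (Fin r → D))
    (hX : ∀ (g : Equiv.Perm D) (hg : ∀ x : D, x ∈ Δ ↔ g x ∈ Δ),
      (∀ x ∉ Δ, g x = x) →
      g.subtypePerm (fun x => (hg x).symm) ∈ alternatingGroup {x // x ∈ Δ} →
      ∀ u ∈ X, (fun i => g (u i)) ∈ X)
    (u v : Fin r → D)
    (h1 : ∀ i : Fin r, u i ∈ Δ ↔ v i ∈ Δ)
    (h2 : ∀ i : Fin r, u i ∉ Δ → u i = v i)
    (h3 : ∀ i j : Fin r, u i = u j ↔ v i = v j) :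
    u ∈ X ↔ v ∈ X :=
  stmt_10_general D Δ r hcard X hX u v h1 h2 h3
end

section
/- Let D be a finite set and R a binary relation on D with m = |R| (the number of pairs in R). Define R^{≤n} = ⋃_{i=1}^{n} R^i and R^{=n} = R^n ∖ R^{≤n−1} (with R^{≤0} = ∅), and define the 6-ary relation Run = ⋃_{i=1}^{m} R^{≤i} × R^{≤i+1} × R^{=i+1}, a set of triples of pairs over D. For a set X of triples of pairs over D and a pair (x,y), write X̃(x,y) = {(p,q) : (p,q,(x,y)) ∈ X}, Ĥ(x,y) = {p : ∃q, (p,q) ∈ X̃(x,y)}, Č(x,y) = {q : ∃p, (p,q) ∈ X̃(x,y)}, and π(X) = {(x,y) : X̃(x,y) ≠ ∅}. Then X = Run if and only if all of the following hold: (1) for every (x,y) ∈ π(X): (a) X̃(x,y) = Ĥ(x,y) × Č(x,y); (b) R ⊆ Ĥ(x,y); (c) Č(x,y) = Ĥ(x,y) ∪ Ĥ(x,y) ∘ R; (d) (x,y) ∈ Č(x,y) ∖ Ĥ(x,y); (e) every pair (x',y') ∈ Č(x,y) ∖ Ĥ(x,y) belongs to π(X) and satisfies Ĥ(x',y') = Ĥ(x,y);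 (2) R^{=2} ⊆ π(X), and for every (x,y) ∈ R^{=2}, Ĥ(x,y) = R; (3) for every (x,y) ∈ π(X) with (Č(x,y) ∘ R) ∖ Č(x,y) ≠ ∅, there exists (x',y') ∈ π(X) with Ĥ(x',y') = Č(x,y); (4) for every (x,y) ∈ π(X) with Ĥ(x,y) ≠ R, there exists (x',y') ∈ π(X) with Č(x',y') = Ĥ(x,y). -/
/-- Composition of binary relations given as sets of pairs:
S ∘ T = {(x,z) : ∃ y, (x,y) ∈ S ∧ (y,z) ∈ T}. -/
def relComp {α : Type*} (S T : Set (α × α)) : Set (α × α) :=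
  {p | ∃ y, (p.1, y) ∈ S ∧ (y, p.2) ∈ T}

/-- Composition powers of a set of pairs: R^1 = R and R^{n+1} = R^n ∘ R
(R^0 is set to ∅ and is only used through `relLe R 0 = ∅`). -/
def relPow {α : Type*} (R : Set (α × α)) : ℕ → Set (α × α)
  | 0 => ∅
  | 1 => R
  | n + 2 => relComp (relPow R (n + 1)) R

/-- R^{≤n} = ⋃_{i=1}^{n} R^i (so R^{≤0} = ∅). -/
def relLe {α : Type*} (R : Set (α × α)) (n : ℕ) : Set (α × α) :=
  ⋃ i ∈ Finset.Icc 1 n, relPow R i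

/-- R^{=n} = R^n ∖ R^{≤n−1}. -/
def relEq {α : Type*} (R : Set (α × α)) (n : ℕ) : Set (α × α) :=
  relPow R n \ relLe R (n - 1)

/-- Run = ⋃_{i=1}^{m} R^{≤i} × R^{≤i+1} × R^{=i+1}, a set of triples of pairs. -/
def run {α : Type*} (R : Set (α × α)) (m : ℕ) : Set ((α × α) × (α × α) × (α × α)) :=
  ⋃ i ∈ Finset.Icc 1 m, relLe R i ×ˢ (relLe R (i + 1) ×ˢ relEq R (i + 1))

/-- X̃(z) = {(p,q) : (p,q,z) ∈ X}. -/
def tilde {α : Type*} (X : Set ((α × α) × (α × α) × (α × α))) (z : α × α) :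
    Set ((α × α) × (α × α)) :=
  {pq | (pq.1, pq.2, z) ∈ X}

/-- Ĥ(z) = {p : ∃ q, (p,q) ∈ X̃(z)}. -/
def hat {α : Type*} (X : Set ((α × α) × (α × α) × (α × α))) (z : α × α) :
    Set (α × α) :=
  {p | ∃ q, (p, q) ∈ tilde X z}

/-- Č(z) = {q : ∃ p, (p,q) ∈ X̃(z)}. -/
def check {α : Type*} (X : Set ((α × α) × (α × α) × (α × α))) (z : α × α) :
    Set (α × α) :=
  {q | ∃ p, (p, q) ∈ tilde X z}

/-- π(X) = {z : X̃(z) ≠ ∅}. -/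
def proj56 {α : Type*} (X : Set ((α × α) × (α × α) × (α × α))) : Set (α × α) :=
  {z | tilde X z ≠ ∅}

/-!
A pair `z ∈ R^{=i+1}` with `i ≥ 1` has fibre `R^{≤i} × R^{≤i+1}` in `Run`, and `i + 1 ≤ |R|`
always holds, so `Run` is exactly the union of these fibres over all pairs at distance at least 2;
conditions (1)–(4) are then read off from `R^{≤i+1} = R^{≤i} ∪ R^{≤i} ∘ R`. Conversely, (1c), (1d)
and (4) force `Ĥ(z) = R^{≤i}` and `z ∈ R^{=i+1}` for every `z ∈ π(X)`, while (2), (3) and (1e)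
put every pair at distance at least 2 into `π(X)`; by (1a) the fibres of `X` and `Run` agree.
-/

open Set

theorem Function.iterate_eq_of_iterate_succ_eq {β : Type*} {f : β → β} {x : β} {k j : ℕ}
    (h : f^[k + 1] x = f^[k] x) (hkj : k ≤ j) : f^[j] x = f^[k] x := by
  obtain ⟨d, rfl⟩ := Nat.exists_eq_add_of_le hkj
  rw [add_comm, Function.iterate_add_apply]
  exact Function.iterate_fixed ((Function.iterate_succ_apply' f k x).symm.trans h) d

/-- Until they stabilise, the iterates `Φ^[k] ∅` grow strictly, so they gain an element per step. -/
theorem Set.add_one_le_ncard_iterate {β : Type*} [Finite β] {Φ : Set β → Set β}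
    (hΦ : Monotone Φ) {n : ℕ} (h : Φ^[n + 1] ∅ ≠ Φ^[n] ∅) : n + 1 ≤ (Φ^[n + 1] ∅).ncard := by
  have hmono : Monotone fun k => Φ^[k] ∅ := hΦ.monotone_iterate_of_le_map (empty_subset _)
  have hstrict : ∀ k ≤ n, Φ^[k] ∅ ⊂ Φ^[k + 1] ∅ := fun k hk =>
    (hmono k.le_succ).ssubset_of_ne fun heq => h <|
      (Function.iterate_eq_of_iterate_succ_eq heq.symm (by omega)).trans
        (Function.iterate_eq_of_iterate_succ_eq heq.symm hk).symm
  suffices ∀ k ≤ n + 1, k ≤ (Φ^[k] ∅).ncard from this _ le_rfl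
  intro k hk
  induction k with
  | zero => exact Nat.zero_le _
  | succ k ih => exact (ih (by omega)).trans_lt (ncard_lt_ncard (hstrict k (by omega)))

section Relations

variable {α : Type*} (R : Set (α × α))

theorem relComp_union_left (S S' : Set (α × α)) :
    relComp (S ∪ S') R = relComp S R ∪ relComp S' R := by
  ext; simp only [relComp, mem_union, mem_ofPred_eq, or_and_right, exists_or]

@[simp]
theorem relComp_empty_left : relComp ∅ R = ∅ := by
  ext; simp [relComp]

@[simp]
theorem relLe_zero : relLe R 0 = ∅ := by
  simp [relLe]

theorem relLe_succ_eq_union_relPow (k : ℕ) : relLe R (k + 1) = relLe R k ∪ relPow R (k + 1) := by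
  rw [relLe, ← Finset.insert_Icc_right_eq_Icc_add_one (by omega), Finset.set_biUnion_insert,
    union_comm, relLe]

theorem relLe_succ (k : ℕ) : relLe R (k + 1) = R ∪ relComp (relLe R k) R := by
  induction k with
  | zero => simp [relLe_succ_eq_union_relPow, relPow]
  | succ k ih =>
    calc relLe R (k + 2) = relLe R (k + 1) ∪ relComp (relPow R (k + 1)) R :=
          relLe_succ_eq_union_relPow R (k + 1)
      _ = R ∪ relComp (relLe R (k + 1)) R := by
          conv_lhs => rw [ih]
          rw [relLe_succ_eq_union_relPow R k, relComp_union_left, union_assoc]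

theorem relLe_one : relLe R 1 = R := by
  simp [relLe_succ]

theorem relLe_mono : Monotone (relLe R) :=
  monotone_nat_of_le_succ fun k => relLe_succ_eq_union_relPow R k ▸ subset_union_left

theorem subset_relLe {i : ℕ} (hi : 1 ≤ i) : R ⊆ relLe R i :=
  (relLe_one R).symm.subset.trans (relLe_mono R hi)

theorem relLe_succ_eq_union {k : ℕ} (hk : 1 ≤ k) :
    relLe R (k + 1) = relLe R k ∪ relComp (relLe R k) R := by
  refine (relLe_succ R k).trans (subset_antisymm ?_ ?_)
  · exact union_subset_union_left _ (subset_relLe R hk)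
  · exact union_subset (relLe_succ R k ▸ relLe_mono R k.le_succ) subset_union_right

theorem relLe_eq_iterate (k : ℕ) : relLe R k = (fun S => R ∪ relComp S R)^[k] ∅ := by
  induction k with
  | zero => exact relLe_zero R
  | succ k ih => rw [relLe_succ, Function.iterate_succ_apply', ← ih]

theorem relEq_succ (k : ℕ) : relEq R (k + 1) = relLe R (k + 1) \ relLe R k := by
  rw [relEq, relLe_succ_eq_union_relPow, union_sdiff_left, Nat.add_sub_cancel]

theorem relEq_one : relEq R 1 = R := by
  simp [relEq_succ R 0, relLe_one]

theorem eq_of_mem_relEq {i j : ℕ} {z : α × α} (hi : z ∈ relEq R (i + 1))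
    (hj : z ∈ relEq R (j + 1)) : i = j := by
  rw [relEq_succ] at hi hj
  by_contra hne
  rcases Nat.lt_or_gt_of_ne hne with h | h
  · exact hj.2 (relLe_mono R h hi.1)
  · exact hi.2 (relLe_mono R h hj.1)

/-- Once `R^{≤k} = R^{≤k+1}`, the sequence `R^{≤j}` is constant from `k` on. -/
theorem relEq_nonempty_of_le {n k : ℕ} (hn : (relEq R (n + 1)).Nonempty) (hkn : k ≤ n) :
    (relEq R (k + 1)).Nonempty := by
  rw [relEq_succ, sdiff_nonempty] at hn ⊢
  intro hk
  have hstable : relLe R (k + 1) = relLe R k := (hk.antisymm (relLe_mono R k.le_succ))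
  simp only [relLe_eq_iterate] at hstable hn
  rw [Function.iterate_eq_of_iterate_succ_eq (j := n + 1) hstable (by omega),
    Function.iterate_eq_of_iterate_succ_eq hstable hkn] at hn
  exact hn subset_rfl

/-- The pairs `(x, y)` with `y` reachable from `x` in at most `k` steps are the iterates of the
monotone map `T ↦ R[x] ∪ R[T]` on `Set α`, and they all lie among the targets of `R`. -/
theorem add_one_le_ncard_of_mem_relEq [Finite α] {n : ℕ} {z : α × α} (hz : z ∈ relEq R (n + 1)) :
    n + 1 ≤ R.ncard := by
  set Ψ : Set α → Set α := fun T => {c | (z.1, c) ∈ R ∨ ∃ b ∈ T, (b, c) ∈ R}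
  have hrow : ∀ k, Prod.mk z.1 ⁻¹' relLe R k = Ψ^[k] ∅ := by
    intro k
    induction k with
    | zero => simp
    | succ k ih => rw [relLe_succ, Function.iterate_succ_apply', ← ih]; rfl
  have hΨ : Monotone Ψ := fun S T hST c => Or.imp_right fun ⟨b, hb, hbc⟩ => ⟨b, hST hb, hbc⟩
  have hne : Ψ^[n + 1] ∅ ≠ Ψ^[n] ∅ := by
    rw [relEq_succ] at hz
    rw [← hrow, ← hrow]
    exact fun h => hz.2 (show z.2 ∈ Prod.mk z.1 ⁻¹' relLe R n from h ▸ hz.1)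
  have htargets : Ψ^[n + 1] ∅ ⊆ Prod.snd '' R := by
    rw [Function.iterate_succ_apply']
    rintro c (hc | ⟨b, -, hc⟩)
    exacts [⟨_, hc, rfl⟩, ⟨_, hc, rfl⟩]
  calc n + 1 ≤ (Ψ^[n + 1] ∅).ncard := add_one_le_ncard_iterate hΨ hne
    _ ≤ (Prod.snd '' R).ncard := ncard_le_ncard htargets
    _ ≤ R.ncard := ncard_image_le

theorem relLe_nonempty_of_mem_relEq {n i : ℕ} {z : α × α} (hz : z ∈ relEq R (n + 1))
    (hi : 1 ≤ i) : (relLe R i).Nonempty :=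
  (relEq_one R ▸ relEq_nonempty_of_le R ⟨z, hz⟩ (Nat.zero_le n)).mono (subset_relLe R hi)

end Relations

section Fibres

variable {α : Type*}

theorem hat_of_tilde_eq_prod {X : Set ((α × α) × (α × α) × (α × α))} {z : α × α}
    {s t : Set (α × α)} (h : tilde X z = s ×ˢ t) (ht : t.Nonempty) : hat X z = s := by
  ext p
  simp only [hat, h, mem_ofPred_eq, mem_prod]
  exact ⟨fun ⟨_, hp, _⟩ => hp, fun hp => ⟨_, hp, ht.some_mem⟩⟩

theorem check_of_tilde_eq_prod {X : Set ((α × α) × (α × α) × (α × α))} {z : α × α}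
    {s t : Set (α × α)} (h : tilde X z = s ×ˢ t) (hs : s.Nonempty) : check X z = t := by
  ext q
  simp only [check, h, mem_ofPred_eq, mem_prod]
  exact ⟨fun ⟨_, _, hq⟩ => hq, fun hq => ⟨_, hs.some_mem, hq⟩⟩

theorem eq_of_tilde_eq {X Y : Set ((α × α) × (α × α) × (α × α))}
    (h : ∀ z, tilde X z = tilde Y z) : X = Y := by
  ext ⟨p, q, z⟩
  exact Set.ext_iff.1 (h z) (p, q)

end Fibres

section Run

variable {α : Type*} (R : Set (α × α)) {m : ℕ}

theorem tilde_run_eq_empty {z : α × α} (h : ∀ i, 1 ≤ i → z ∉ relEq R (i + 1)) :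
    tilde (run R m) z = ∅ := by
  ext ⟨p, q⟩
  simp only [tilde, run, mem_iUnion, mem_prod, Finset.mem_Icc, mem_ofPred_eq,
    mem_empty_iff_false, iff_false]
  rintro ⟨i, ⟨hi, -⟩, -, -, hz⟩
  exact h i hi hz

theorem exists_mem_relEq_of_mem_proj56_run {z : α × α} (hz : z ∈ proj56 (run R m)) :
    ∃ i, 1 ≤ i ∧ z ∈ relEq R (i + 1) := by
  by_contra! h
  exact hz (tilde_run_eq_empty R h)

variable [Finite α]

theorem tilde_run {i : ℕ} {z : α × α} (hm : R.ncard ≤ m + 1) (hi : 1 ≤ i)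
    (hz : z ∈ relEq R (i + 1)) : tilde (run R m) z = relLe R i ×ˢ relLe R (i + 1) := by
  ext ⟨p, q⟩
  simp only [tilde, run, mem_iUnion, mem_prod, Finset.mem_Icc, mem_ofPred_eq]
  constructor
  · rintro ⟨j, -, hp, hq, hzj⟩
    obtain rfl := eq_of_mem_relEq R hzj hz
    exact ⟨hp, hq⟩
  · rintro ⟨hp, hq⟩
    exact ⟨i, ⟨hi, by have := add_one_le_ncard_of_mem_relEq R hz; omega⟩, hp, hq, hz⟩

theorem mem_proj56_run_of_mem_relEq {i : ℕ} {z : α × α} (hm : R.ncard ≤ m + 1) (hi : 1 ≤ i)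
    (hz : z ∈ relEq R (i + 1)) :
    z ∈ proj56 (run R m) ∧ hat (run R m) z = relLe R i ∧
      check (run R m) z = relLe R (i + 1) := by
  have hs := relLe_nonempty_of_mem_relEq R hz hi
  have ht := relLe_nonempty_of_mem_relEq R hz (Nat.le_succ_of_le hi)
  have htilde := tilde_run R hm hi hz
  exact ⟨(htilde ▸ hs.prod ht).ne_empty, hat_of_tilde_eq_prod htilde ht,
    check_of_tilde_eq_prod htilde hs⟩

end Run

/-- Conditions (1)–(4) of the characterisation of `run`. -/
def RunConditions {α : Type*} (R : Set (α × α)) (X : Set ((α × α) × (α × α) × (α × α))) :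
    Prop :=
  (∀ z ∈ proj56 X,
      tilde X z = hat X z ×ˢ check X z ∧
      R ⊆ hat X z ∧
      check X z = hat X z ∪ relComp (hat X z) R ∧
      z ∈ check X z \ hat X z ∧
      (∀ z' ∈ check X z \ hat X z, z' ∈ proj56 X ∧ hat X z' = hat X z)) ∧
    (relEq R 2 ⊆ proj56 X ∧ ∀ z ∈ relEq R 2, hat X z = R) ∧
    (∀ z ∈ proj56 X, (relComp (check X z) R \ check X z).Nonempty →
      ∃ z' ∈ proj56 X, hat X z' = check X z) ∧
    (∀ z ∈ proj56 X, hat X z ≠ R →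
      ∃ z' ∈ proj56 X, check X z' = hat X z)

section Characterisation

variable {α : Type*} [Finite α] (R : Set (α × α)) {m : ℕ}

theorem runConditions_run (hm : R.ncard ≤ m + 1) : RunConditions R (run R m) := by
  have hrun {i : ℕ} {z : α × α} (hi : 1 ≤ i) (hz : z ∈ relEq R (i + 1)) :=
    mem_proj56_run_of_mem_relEq R hm hi hz
  refine ⟨fun z hz => ?_,
    ⟨fun z hz => (hrun le_rfl hz).1, fun z hz => (hrun le_rfl hz).2.1.trans (relLe_one R)⟩,
    fun z hz ⟨w, hw⟩ => ?_, fun z hz hzR => ?_⟩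
  · obtain ⟨i, hi, hzi⟩ := exists_mem_relEq_of_mem_proj56_run R hz
    obtain ⟨-, hhat, hcheck⟩ := hrun hi hzi
    rw [hhat, hcheck, tilde_run R hm hi hzi, ← relEq_succ]
    exact ⟨rfl, subset_relLe R hi, relLe_succ_eq_union R hi, hzi,
      fun z' hz' => ⟨(hrun hi hz').1, (hrun hi hz').2.1⟩⟩
  · obtain ⟨i, hi, hzi⟩ := exists_mem_relEq_of_mem_proj56_run R hz
    rw [(hrun hi hzi).2.2] at hw ⊢
    have hw' : w ∈ relEq R (i + 1 + 1) := by
      rw [relEq_succ, relLe_succ_eq_union R (by omega)]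
      exact ⟨Or.inr hw.1, hw.2⟩
    exact ⟨w, (hrun (by omega) hw').1, (hrun (by omega) hw').2.1⟩
  · obtain ⟨i, hi, hzi⟩ := exists_mem_relEq_of_mem_proj56_run R hz
    obtain ⟨-, hhat, -⟩ := hrun hi hzi
    have hi1 : i ≠ 1 := by rintro rfl; exact hzR (hhat.trans (relLe_one R))
    obtain ⟨k, hk, rfl⟩ : ∃ k, 1 ≤ k ∧ i = k + 1 := ⟨i - 1, by omega, by omega⟩
    obtain ⟨w, hw⟩ := relEq_nonempty_of_le R ⟨z, hzi⟩ k.le_succ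
    exact ⟨w, (hrun hk hw).1, (hrun hk hw).2.2.trans hhat.symm⟩

variable {R} {X : Set ((α × α) × (α × α) × (α × α))}

/-- Condition (4) walks down from `Ĥ(z)` through strictly smaller sets `Ĥ(z') ⊂ Č(z') = Ĥ(z)`
until it reaches `R`; condition (1c) then adds one composition with `R` at every step back up. -/
theorem exists_hat_eq_relLe (h : RunConditions R X) {z : α × α} (hz : z ∈ proj56 X) :
    ∃ i, 1 ≤ i ∧ hat X z = relLe R i ∧ z ∈ relEq R (i + 1) := by
  obtain ⟨h1, -, -, h4⟩ := h
  have hlevel {z : α × α} (hz : z ∈ proj56 X) {i : ℕ} (hi : 1 ≤ i) (hhat : hat X z = relLe R i) :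
      ∃ i, 1 ≤ i ∧ hat X z = relLe R i ∧ z ∈ relEq R (i + 1) := by
    obtain ⟨-, -, hcheck, hzmem, -⟩ := h1 z hz
    rw [hcheck, hhat, ← relLe_succ_eq_union R hi, ← relEq_succ] at hzmem
    exact ⟨i, hi, hhat, hzmem⟩
  suffices ∀ S, ∀ z ∈ proj56 X, hat X z = S →
      ∃ i, 1 ≤ i ∧ hat X z = relLe R i ∧ z ∈ relEq R (i + 1) from this _ z hz rfl
  intro S
  induction S using WellFoundedLT.induction with
  | _ S ih =>
  rintro z hz rfl
  by_cases hzR : hat X z = R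
  · exact hlevel hz le_rfl (hzR.trans (relLe_one R).symm)
  obtain ⟨z', hz', hcz'⟩ := h4 z hz hzR
  obtain ⟨-, -, hcheck', hz'mem, -⟩ := h1 z' hz'
  have hlt : hat X z' < hat X z := hcz' ▸ (hcheck' ▸ subset_union_left).ssubset_of_ne
    fun heq => hz'mem.2 (heq ▸ hz'mem.1)
  obtain ⟨j, hj, hhat', -⟩ := ih _ hlt z' hz' rfl
  exact hlevel hz (Nat.le_succ_of_le hj)
    (by rw [← hcz', hcheck', hhat', relLe_succ_eq_union R hj])

theorem relEq_subset_proj56 (h : RunConditions R X) {i : ℕ} (hi : 1 ≤ i) :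
    relEq R (i + 1) ⊆ proj56 X := by
  induction i, hi using Nat.le_induction with
  | base => exact h.2.1.1
  | succ i hi ih =>
    intro z hz
    obtain ⟨w, hw⟩ := relEq_nonempty_of_le R ⟨z, hz⟩ i.le_succ
    obtain ⟨j, -, hhatw, hwj⟩ := exists_hat_eq_relLe h (ih hw)
    obtain rfl := eq_of_mem_relEq R hwj hw
    have hcheckw : check X w = relLe R (j + 1) := by
      rw [(h.1 w (ih hw)).2.2.1, hhatw, relLe_succ_eq_union R hi]
    rw [relEq_succ, relLe_succ_eq_union R (by omega)] at hz
    have hzw : z ∈ relComp (check X w) R \ check X w := by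
      rw [hcheckw]
      exact ⟨hz.1.resolve_left hz.2, hz.2⟩
    obtain ⟨z', hz', hhat'⟩ := h.2.2.1 w (ih hw) ⟨z, hzw⟩
    obtain ⟨-, -, hcheck', -, hdiff'⟩ := h.1 z' hz'
    refine (hdiff' z ?_).1
    rwa [hcheck', hhat', hcheckw]

theorem eq_run_of_runConditions (hm : R.ncard ≤ m + 1) (h : RunConditions R X) :
    X = run R m := by
  refine eq_of_tilde_eq fun z => ?_
  by_cases hz : z ∈ proj56 X
  · obtain ⟨i, hi, hhat, hzi⟩ := exists_hat_eq_relLe h hz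
    obtain ⟨htilde, -, hcheck, -, -⟩ := h.1 z hz
    rw [htilde, tilde_run R hm hi hzi, hcheck, hhat, relLe_succ_eq_union R hi]
  · rw [tilde_run_eq_empty R fun i hi hzi => hz (relEq_subset_proj56 h hi hzi)]
    simpa [proj56] using hz

end Characterisation

/-- Let D be a finite set and R a binary relation on D with m = |R|.
Then X = Run if and only if conditions (1)(a)-(e), (2), (3), (4) hold. -/
theorem stmt_12 (D : Type) [Fintype D] (R : Set (D × D)) (m : ℕ)
    (hm : m = R.ncard)
    (X : Set ((D × D) × (D × D) × (D × D))) :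
    X = run R m ↔
      ((∀ z ∈ proj56 X,
          tilde X z = hat X z ×ˢ check X z ∧
          R ⊆ hat X z ∧
          check X z = hat X z ∪ relComp (hat X z) R ∧
          z ∈ check X z \ hat X z ∧
          (∀ z' ∈ check X z \ hat X z, z' ∈ proj56 X ∧ hat X z' = hat X z)) ∧
        (relEq R 2 ⊆ proj56 X ∧ ∀ z ∈ relEq R 2, hat X z = R) ∧
        (∀ z ∈ proj56 X, (relComp (check X z) R \ check X z).Nonempty →
          ∃ z' ∈ proj56 X, hat X z' = check X z) ∧
        (∀ z ∈ proj56 X, hat X z ≠ R →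
          ∃ z' ∈ proj56 X, check X z' = hat X z)) := by
  have hm' : R.ncard ≤ m + 1 := by omega
  exact ⟨fun h => h ▸ runConditions_run R hm', eq_run_of_runConditions hm'⟩
end

section
/- For every first-order formula φ with k free variables in the language of pure equality (no non-logical symbols), there exist a finite set S of equality types on k variables and a natural number N such that for every finite set D with |D| ≥ N (viewed as a structure for the empty language) and every k-tuple ā over D: φ holds of ā in D if and only if ā realizes some equality type in S. -/
open FirstOrder

lemma stmt13_empty_term_eq {α : Type*} (t : Language.empty.Term α) :
    ∃ p, t = Language.Term.var p := by
  cases t with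
  | var p => exact ⟨p, rfl⟩
  | func f _ => exact isEmptyElim f

lemma stmt13_key {α : Type} [Fintype α] {n : ℕ} (φ : Language.empty.BoundedFormula α n) :
    ∃ N : ℕ, ∀ (D D' : Type) [Language.empty.Structure D] [Language.empty.Structure D']
      [Fintype D] [Fintype D'], N ≤ Fintype.card D → N ≤ Fintype.card D' →
      ∀ (v : α → D) (xs : Fin n → D) (v' : α → D') (xs' : Fin n → D'),
      (∀ p q : α ⊕ Fin n,
        Sum.elim v xs p = Sum.elim v xs q ↔ Sum.elim v' xs' p = Sum.elim v' xs' q) →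
      φ.Realize v xs → φ.Realize v' xs' := by
  induction φ with
  | falsum => exact ⟨0, fun _ _ _ _ _ _ _ _ _ _ _ _ _ h => h.elim⟩
  | @equal m t₁ t₂ =>
    obtain ⟨p, rfl⟩ := stmt13_empty_term_eq t₁
    obtain ⟨q, rfl⟩ := stmt13_empty_term_eq t₂
    refine ⟨0, ?_⟩
    intro D D' _ _ _ _ _ _ v xs v' xs' hpat h
    exact (hpat p q).1 h
  | rel R ts => exact isEmptyElim R
  | imp φ₁ φ₂ ih₁ ih₂ =>
    obtain ⟨N₁, h₁⟩ := ih₁; obtain ⟨N₂, h₂⟩ := ih₂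
    refine ⟨max N₁ N₂, ?_⟩
    intro D D' _ _ _ _ hD hD' v xs v' xs' hpat h hφ₁'
    exact h₂ D D' (le_trans (le_max_right _ _) hD) (le_trans (le_max_right _ _) hD') v xs v' xs'
      hpat (h (h₁ D' D (le_trans (le_max_left _ _) hD') (le_trans (le_max_left _ _) hD) v' xs' v xs
        (fun p q => (hpat p q).symm) hφ₁'))
  | @all m ψ ih =>
    obtain ⟨N, hN⟩ := ih
    refine ⟨max N (Fintype.card α + m + 1), ?_⟩
    intro D D' _ _ _ _ hD hD' v xs v' xs' hpat h
    rw [Language.BoundedFormula.realize_all] at h ⊢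
    intro x'
    have hmatch : ∃ x : D, ∀ p : α ⊕ Fin m,
        (x = Sum.elim v xs p ↔ x' = Sum.elim v' xs' p) := by
      by_cases hc : ∃ p, x' = Sum.elim v' xs' p
      · obtain ⟨p₀, hp₀⟩ := hc
        refine ⟨Sum.elim v xs p₀, fun q => ?_⟩
        rw [hp₀]; exact hpat p₀ q
      · push_neg at hc
        have : ∃ x : D, ∀ p, x ≠ Sum.elim v xs p := by
          by_contra hx
          push_neg at hx
          have hsurj : Function.Surjective (Sum.elim v xs) := fun x => by
            obtain ⟨p, hp⟩ := hx x; exact ⟨p, hp.symm⟩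
          have h1 := Fintype.card_le_of_surjective _ hsurj
          have h2 := le_trans (le_max_right _ _) hD
          simp [Fintype.card_sum] at h1
          omega
        obtain ⟨x, hx⟩ := this
        exact ⟨x, fun p => iff_of_false (hx p) (hc p)⟩
    obtain ⟨x, hx⟩ := hmatch
    refine hN D D' (le_trans (le_max_left _ _) hD) (le_trans (le_max_left _ _) hD')
      v (Fin.snoc xs x) v' (Fin.snoc xs' x') ?_ (h x)
    have ev : ∀ p : α ⊕ Fin (m + 1),
        (Sum.elim v (Fin.snoc xs x) p = x ∧ Sum.elim v' (Fin.snoc xs' x') p = x') ∨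
        (∃ q : α ⊕ Fin m, Sum.elim v (Fin.snoc xs x) p = Sum.elim v xs q ∧
          Sum.elim v' (Fin.snoc xs' x') p = Sum.elim v' xs' q) := by
      rintro (a | i)
      · exact Or.inr ⟨Sum.inl a, rfl, rfl⟩
      · induction i using Fin.lastCases with
        | last => exact Or.inl ⟨by simp, by simp⟩
        | cast j => exact Or.inr ⟨Sum.inr j, by simp, by simp⟩
    intro p q
    rcases ev p with ⟨hp, hp'⟩ | ⟨p₁, hp, hp'⟩ <;> rcases ev q with ⟨hq, hq'⟩ | ⟨q₁, hq, hq'⟩ <;>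
      rw [hp, hp', hq, hq']
    · simp
    · exact hx q₁
    · constructor
      · intro h'; exact ((hx p₁).1 h'.symm).symm
      · intro h'; exact ((hx p₁).2 h'.symm).symm
    · exact hpat p₁ q₁

lemma stmt13_setoid_fin_finite (k : ℕ) : Finite (Setoid (Fin k)) := by
  have hinj : Function.Injective (fun s : Setoid (Fin k) => s.r) := by
    intro s t h
    exact Setoid.ext fun i j => by rw [show s.r = t.r from h]
  exact Finite.of_injective _ hinj

lemma stmt13_setoid_realized (k C : ℕ) (hk : k ≤ C) (s : Setoid (Fin k)) :
    ∃ f : Fin k → Fin C, ∀ i j, f i = f j ↔ s.r i j := by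
  classical
  have hcard : Fintype.card (Quotient s) ≤ C := by
    calc Fintype.card (Quotient s) ≤ Fintype.card (Fin k) := Fintype.card_quotient_le _
    _ = k := Fintype.card_fin k
    _ ≤ C := hk
  obtain ⟨e⟩ := Function.Embedding.nonempty_of_card_le (by simpa using hcard :
    Fintype.card (Quotient s) ≤ Fintype.card (Fin C))
  refine ⟨fun i => e (Quotient.mk s i), fun i j => ?_⟩
  rw [e.apply_eq_iff_eq]
  exact ⟨Quotient.exact, Quotient.sound⟩

lemma stmt13_fr {L : Language} {α M : Type} [L.Structure M] (φ : L.Formula α)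
    (v : α → M) (xs : Fin 0 → M) :
    Language.BoundedFormula.Realize φ v xs ↔ Language.Formula.Realize φ v :=
  iff_of_eq (congrArg (Language.BoundedFormula.Realize φ v) (funext fun x => x.elim0))

/-- For every first-order formula φ with k free variables in the language
of pure equality, there exist a finite set S of equality types on k variables (here:
equivalence relations on the k variable positions) and a natural number N such that for
every finite set D with |D| ≥ N and every k-tuple ā over D: φ holds of ā in D if and
only if ā realizes some equality type in S. -/
theorem stmt_13 (k : ℕ) (φ : Language.empty.Formula (Fin k)) :
    ∃ (S : Set (Setoid (Fin k))) (N : ℕ), S.Finite ∧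
      ∀ (D : Type) [Fintype D] [Language.empty.Structure D],
        N ≤ Fintype.card D →
        ∀ a : Fin k → D,
          φ.Realize a ↔ ∃ s ∈ S, ∀ i j : Fin k, a i = a j ↔ s.r i j := by
  classical
  obtain ⟨N, hN⟩ := stmt13_key φ
  set C := N + k + 1 with hC
  haveI : Language.empty.Structure (Fin C) := Language.emptyStructure
  choose f hf using stmt13_setoid_realized k C (by omega)
  haveI := stmt13_setoid_fin_finite k
  refine ⟨{s : Setoid (Fin k) | Language.Formula.Realize φ (f s)}, C, Set.toFinite _, ?_⟩
  intro D _ _ hD a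
  have hcardD : N ≤ Fintype.card D := by omega
  have hcardC : N ≤ Fintype.card (Fin C) := by simp; omega
  have pat : ∀ (b : Fin k → D) (c : Fin k → Fin C),
      (∀ i j, b i = b j ↔ c i = c j) →
      (∀ p q : Fin k ⊕ Fin 0, Sum.elim b (default : Fin 0 → D) p =
        Sum.elim b default q ↔ Sum.elim c (default : Fin 0 → Fin C) p = Sum.elim c default q) := by
    rintro b c h (i | z) (j | z)
    · exact h i j
    all_goals exact z.elim0
  constructor
  · intro hr
    refine ⟨Setoid.ker a,
      show Language.Formula.Realize φ (f (Setoid.ker a)) from ?_, fun i j => Iff.rfl⟩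
    exact (stmt13_fr φ _ _).1 (hN D (Fin C) hcardD hcardC a default (f (Setoid.ker a)) default
      (pat a (f (Setoid.ker a)) (fun i j => (hf (Setoid.ker a) i j).symm))
      ((stmt13_fr φ _ _).2 hr))
  · rintro ⟨s, hs, hsa⟩
    exact (stmt13_fr φ _ _).1 (hN (Fin C) D hcardC hcardD (f s) default a default
      (fun p q => (pat a (f s) (fun i j => ((hsa i j).trans (hf s i j).symm)) p q).symm)
      ((stmt13_fr φ _ _).2 hs))
end

section
/- For every first-order formula φ with k ≥ 1 free variables in the language of pure equality (no non-logical symbols), there exists a natural number N such that exactly one of the following holds: either for every finite set D with |D| ≥ N the set of k-tuples over D satisfying φ is empty, or for every finite set D with |D| ≥ N the set of k-tuples over D satisfying φ has cardinality at least |D|. -/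
open FirstOrder

namespace Stmt14Aux

lemma term_is_var {β : Type*} (t : Language.empty.Term β) :
    ∃ i, t = Language.Term.var i := by
  cases t with
  | var i => exact ⟨i, rfl⟩
  | func f _ => exact isEmptyElim f

lemma ext_point {ι : Type} [Fintype ι] {D D' : Type} [Fintype D]
    (hD : Fintype.card ι < Fintype.card D)
    (v : ι → D) (v' : ι → D')
    (h : ∀ i j, v i = v j ↔ v' i = v' j) (x' : D') :
    ∃ x : D, ∀ i, v i = x ↔ v' i = x' := by
  by_cases h' : ∃ i, v' i = x'
  · obtain ⟨i₀, hi₀⟩ := h'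
    exact ⟨v i₀, fun i => by rw [h i i₀, hi₀]⟩
  · push_neg at h'
    have hsurj : ¬ Function.Surjective v := fun hs =>
      absurd (Fintype.card_le_of_surjective v hs) (by omega)
    simp only [Function.Surjective, not_forall] at hsurj
    obtain ⟨x, hx⟩ := hsurj
    push_neg at hx
    exact ⟨x, fun i => iff_of_false (hx i) (h' i)⟩

lemma pattern_snoc {α : Type} {n : ℕ} {D D' : Type}
    {a : α → D} {b : Fin n → D} {x : D} {a' : α → D'} {b' : Fin n → D'} {x' : D'}
    (h : ∀ i j, Sum.elim a b i = Sum.elim a b j ↔ Sum.elim a' b' i = Sum.elim a' b' j)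
    (hx : ∀ i, Sum.elim a b i = x ↔ Sum.elim a' b' i = x') :
    ∀ i j, Sum.elim a (Fin.snoc b x) i = Sum.elim a (Fin.snoc b x) j ↔
      Sum.elim a' (Fin.snoc b' x') i = Sum.elim a' (Fin.snoc b' x') j := by
  have key : ∀ p : α ⊕ Fin (n+1),
      (∃ q, Sum.elim a (Fin.snoc b x) p = Sum.elim a b q ∧
            Sum.elim a' (Fin.snoc b' x') p = Sum.elim a' b' q) ∨
      (Sum.elim a (Fin.snoc b x) p = x ∧ Sum.elim a' (Fin.snoc b' x') p = x') := by
    rintro (i | i)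
    · exact Or.inl ⟨Sum.inl i, rfl, rfl⟩
    · refine Fin.lastCases ?_ ?_ i
      · exact Or.inr ⟨by simp, by simp⟩
      · intro j; exact Or.inl ⟨Sum.inr j, by simp, by simp⟩
  intro i j
  rcases key i with ⟨q, hq, hq'⟩ | ⟨hq, hq'⟩ <;> rcases key j with ⟨r, hr, hr'⟩ | ⟨hr, hr'⟩ <;>
    rw [hq, hq', hr, hr']
  · exact h q r
  · exact hx q
  · constructor
    · intro e; exact ((hx r).mp e.symm).symm
    · intro e; exact ((hx r).mpr e.symm).symm
  · simp

lemma key {α : Type} [Fintype α] : ∀ {n : ℕ} (φ : Language.empty.BoundedFormula α n),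
    ∃ N : ℕ, ∀ (D D' : Type) [Fintype D] [Language.empty.Structure D]
      [Fintype D'] [Language.empty.Structure D'],
      N ≤ Fintype.card D → N ≤ Fintype.card D' →
      ∀ (a : α → D) (b : Fin n → D) (a' : α → D') (b' : Fin n → D'),
        (∀ i j, Sum.elim a b i = Sum.elim a b j ↔ Sum.elim a' b' i = Sum.elim a' b' j) →
        (φ.Realize a b ↔ φ.Realize a' b') := by
  intro n φ
  induction φ with
  | falsum => exact ⟨0, fun _ _ _ _ _ _ _ _ _ _ _ _ _ => Iff.rfl⟩
  | equal t₁ t₂ =>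
    refine ⟨0, ?_⟩
    intro D D' _ _ _ _ _ _ a b a' b' h
    obtain ⟨i, rfl⟩ := term_is_var t₁
    obtain ⟨j, rfl⟩ := term_is_var t₂
    exact h i j
  | rel R _ => exact isEmptyElim R
  | imp φ ψ ihφ ihψ =>
    obtain ⟨N₁, h₁⟩ := ihφ
    obtain ⟨N₂, h₂⟩ := ihψ
    refine ⟨max N₁ N₂, ?_⟩
    intro D D' _ _ _ _ hD hD' a b a' b' h
    simp only [Language.BoundedFormula.realize_imp]
    rw [h₁ D D' (le_trans (le_max_left _ _) hD) (le_trans (le_max_left _ _) hD') a b a' b' h,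
        h₂ D D' (le_trans (le_max_right _ _) hD) (le_trans (le_max_right _ _) hD') a b a' b' h]
  | all ψ ih =>
    obtain ⟨N₁, h₁⟩ := ih
    rename_i m
    refine ⟨max N₁ (Fintype.card α + m + 1), ?_⟩
    intro D D' _ _ _ _ hD hD' a b a' b' h
    have hDle : N₁ ≤ Fintype.card D := le_trans (le_max_left _ _) hD
    have hD'le : N₁ ≤ Fintype.card D' := le_trans (le_max_left _ _) hD'
    have hcard : Fintype.card (α ⊕ Fin m) < Fintype.card D := by
      simp only [Fintype.card_sum, Fintype.card_fin]
      exact lt_of_lt_of_le (Nat.lt_succ_self _) (le_trans (le_max_right _ _) hD)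
    have hcard' : Fintype.card (α ⊕ Fin m) < Fintype.card D' := by
      simp only [Fintype.card_sum, Fintype.card_fin]
      exact lt_of_lt_of_le (Nat.lt_succ_self _) (le_trans (le_max_right _ _) hD')
    simp only [Language.BoundedFormula.realize_all]
    constructor
    · intro hall x'
      obtain ⟨x, hxx⟩ := ext_point hcard (Sum.elim a b) (Sum.elim a' b') h x'
      exact (h₁ D D' hDle hD'le a (Fin.snoc b x) a' (Fin.snoc b' x')
        (pattern_snoc h hxx)).mp (hall x)
    · intro hall x
      obtain ⟨x', hxx⟩ := ext_point hcard' (Sum.elim a' b') (Sum.elim a b)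
        (fun i j => (h i j).symm) x
      exact (h₁ D D' hDle hD'le a (Fin.snoc b x) a' (Fin.snoc b' x')
        (pattern_snoc h (fun i => (hxx i).symm))).mpr (hall x')

lemma key' {k : ℕ} (φ : Language.empty.Formula (Fin k)) :
    ∃ N : ℕ, ∀ (D D' : Type) [Fintype D] [Language.empty.Structure D]
      [Fintype D'] [Language.empty.Structure D'],
      N ≤ Fintype.card D → N ≤ Fintype.card D' →
      ∀ (a : Fin k → D) (a' : Fin k → D'),
        (∀ i j, a i = a j ↔ a' i = a' j) →
        (φ.Realize a ↔ φ.Realize a') := by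
  obtain ⟨N, hN⟩ := key φ
  refine ⟨N, fun D D' _ _ _ _ hD hD' a a' h => ?_⟩
  exact hN D D' hD hD' a default a' default
    (by rintro (i | i) (j | j)
        · exact h i j
        · exact j.elim0
        · exact i.elim0
        · exact i.elim0)

end Stmt14Aux

/-- For every first-order formula φ with k ≥ 1 free variables in the
language of pure equality, there exists N such that exactly one of the following holds:
either for every finite set D with |D| ≥ N the set of k-tuples over D satisfying φ is
empty, or for every finite set D with |D| ≥ N that set has cardinality at least |D|. -/
theorem stmt_14 (k : ℕ) (hk : 1 ≤ k) (φ : Language.empty.Formula (Fin k)) :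
    ∃ N : ℕ, Xor'
      (∀ (D : Type) [Fintype D] [Language.empty.Structure D],
        N ≤ Fintype.card D → {a : Fin k → D | φ.Realize a} = ∅)
      (∀ (D : Type) [Fintype D] [Language.empty.Structure D],
        N ≤ Fintype.card D →
          Fintype.card D ≤ {a : Fin k → D | φ.Realize a}.ncard) := by
  classical
  obtain ⟨N₀, hkey⟩ := Stmt14Aux.key' φ
  set N : ℕ := max N₀ k with hNdef
  have hkN : k ≤ N := le_max_right _ _
  have hN₀ : N₀ ≤ N := le_max_left _ _
  have hN1 : 1 ≤ N := le_trans hk hkN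
  letI : Language.empty.Structure (Fin N) := Language.emptyStructure
  have hcardFinN : Fintype.card (Fin N) = N := Fintype.card_fin N
  by_cases hsat : ∃ a : Fin k → Fin N, φ.Realize a
  · obtain ⟨a₀, ha₀⟩ := hsat
    refine ⟨N, Or.inr ⟨?_, ?_⟩⟩
    · intro D _ _ hD
      obtain ⟨g⟩ : Nonempty (Fin N ↪ D) :=
        Function.Embedding.nonempty_of_card_le (by rw [hcardFinN]; exact hD)
      set a : Fin k → D := g ∘ a₀ with ha
      have hpat : ∀ i j, a₀ i = a₀ j ↔ a i = a j := by
        intro i j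
        simp [ha, g.injective.eq_iff]
      have haD : φ.Realize a :=
        (hkey (Fin N) D (by rw [hcardFinN]; exact hN₀) (le_trans hN₀ hD) a₀ a hpat).mp ha₀
      set i₀ : Fin k := ⟨0, hk⟩ with hi₀
      have hmem : ∀ d : D, (Equiv.swap (a i₀) d) ∘ a ∈ {a : Fin k → D | φ.Realize a} := by
        intro d
        refine (hkey D D (le_trans hN₀ hD) (le_trans hN₀ hD) a _ (fun i j => ?_)).mp haD
        simp [(Equiv.swap (a i₀) d).injective.eq_iff]
      have hinj : Function.Injective
          (fun d : D => (⟨Equiv.swap (a i₀) d ∘ a, hmem d⟩ :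
            {a : Fin k → D | φ.Realize a})) := by
        intro d₁ d₂ he
        simp only [Subtype.mk.injEq] at he
        have h2 := congrFun he i₀
        simpa using h2
      calc Fintype.card D = Nat.card D := (Nat.card_eq_fintype_card).symm
        _ ≤ Nat.card {a : Fin k → D | φ.Realize a} :=
            Nat.card_le_card_of_injective _ hinj
        _ = _ := Nat.card_coe_set_eq _
    · intro hA
      have h0 := hA (Fin N) (by rw [hcardFinN])
      rw [Set.eq_empty_iff_forall_notMem] at h0
      exact h0 a₀ ha₀
  · push_neg at hsat
    refine ⟨N, Or.inl ⟨?_, ?_⟩⟩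
    · intro D _ _ hD
      rw [Set.eq_empty_iff_forall_notMem]
      intro a ha
      set s : Finset D := Finset.image a Finset.univ with hs
      have hsle : Fintype.card s ≤ Fintype.card (Fin N) := by
        rw [hcardFinN, Fintype.card_coe]
        exact le_trans (le_trans (Finset.card_image_le) (by simp)) hkN
      obtain ⟨e⟩ : Nonempty (s ↪ Fin N) := Function.Embedding.nonempty_of_card_le hsle
      set a' : Fin k → Fin N := fun i => e ⟨a i, by simp [hs]⟩ with ha'
      have hpat : ∀ i j, a i = a j ↔ a' i = a' j := by
        intro i j
        simp [ha', e.injective.eq_iff, Subtype.ext_iff]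
      exact hsat a' ((hkey D (Fin N) (le_trans hN₀ hD) (by rw [hcardFinN]; exact hN₀)
        a a' hpat).mp ha)
    · intro hB
      have h0 := hB (Fin N) (by rw [hcardFinN])
      have hempty : {a : Fin k → Fin N | φ.Realize a} = ∅ := by
        rw [Set.eq_empty_iff_forall_notMem]
        exact fun a ha => hsat a ha
      rw [hempty, hcardFinN] at h0
      simp at h0
      omega
end
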